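/- arXiv:2111.01962 — 3 statements merged into one kernel-verified Lean document; each statement's English description precedes it below -/
import Mathlib

section
/- Let Θ be a 3×3 phase matrix. Then rank_phase(Θ) < 3 if and only if there exists a family of strictly positive reals (c_σ)_{σ ∈ S_3}, indexed by the permutations of {1,2,3}, such that ∑_{σ ∈ S_3} sgn(σ)·c_σ·∏_{i=1}^{3} Θ_{i,σ(i)} = 0 and ∏_{σ even} c_σ = ∏_{σ odd} c_σ. -/
/-- The phase rank of a complex matrix `Θ`: the minimum rank over all complex matrices
with nonzero entries whose entrywise phases agree with `Θ`. -/
noncomputable def phaseRank {n m : ℕ} (Θ : Matrix (Fin n) (Fin m) ℂ) : ℕ :=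
  sInf {r | ∃ M : Matrix (Fin n) (Fin m) ℂ,
    (∀ i j, M i j ≠ 0) ∧ (∀ i j, M i j / (‖M i j‖ : ℂ) = Θ i j) ∧ M.rank = r}

/-!
A matrix with phases `Θ` is `M i j = a i j * Θ i j` with `a > 0`, and its determinant is the
signed sum of the monomials `∏ i, Θ i (σ i)` with coefficients `c σ = ∏ i, a i (σ i)`. The three
even permutations of `Fin 3` hit every entry of `a` exactly once, and so do the three odd ones, so
these `c` have equal even and odd products. Conversely, after taking logarithms the map `a ↦ c`
is linear and its image is the hyperplane `∑ σ, sign σ * log c σ = 0`; a preimage is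
`log a i j = ∑ τ, ([τ i = j] / 3 - 1 / 18) * log c τ`, because the number of `i` with
`τ i = σ i` is `3` if `σ = τ` and `(1 - sign σ * sign τ) / 2` otherwise.
-/

open Finset Equiv Equiv.Perm Matrix

theorem Matrix.rank_lt_card_iff_det_eq_zero {K n : Type*} [Field K] [Fintype n] [DecidableEq n]
    (A : Matrix n n K) : A.rank < Fintype.card n ↔ A.det = 0 := by
  refine ⟨fun h => by_contra fun hA => h.ne (rank_of_det_ne_zero hA), fun hA => ?_⟩
  refine lt_of_le_of_ne A.rank_le_card_width fun h => ?_
  have hrange : LinearMap.range A.mulVecLin = ⊤ :=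
    Submodule.eq_top_of_finrank_eq (by rw [← Matrix.rank, h, Module.finrank_fintype_fun_eq_card])
  have hunit : IsUnit A :=
    Matrix.mulVec_surjective_iff_isUnit.mp (LinearMap.range_eq_top.mp hrange)
  exact (A.isUnit_iff_isUnit_det.mp hunit).ne_zero hA

theorem Matrix.det_eq_sum_sign_mul_prod {n R : Type*} [Fintype n] [DecidableEq n] [CommRing R]
    (M : Matrix n n R) : M.det = ∑ σ : Perm n, ((sign σ : ℤ) : R) * ∏ i, M i (σ i) := by
  rw [← det_transpose, det_apply']
  rfl

theorem Complex.ne_zero_and_div_norm_eq_iff {z θ : ℂ} (hθ : ‖θ‖ = 1) :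
    (z ≠ 0 ∧ z / ‖z‖ = θ) ↔ ∃ r : ℝ, 0 < r ∧ z = r * θ := by
  constructor
  · rintro ⟨hz, rfl⟩
    refine ⟨‖z‖, norm_pos_iff.mpr hz, ?_⟩
    rw [mul_div_cancel₀ _ (by exact_mod_cast (norm_pos_iff.mpr hz).ne')]
  · rintro ⟨r, hr, rfl⟩
    have hr' : (r : ℂ) ≠ 0 := by exact_mod_cast hr.ne'
    have hθ0 : θ ≠ 0 := norm_ne_zero_iff.mp (by rw [hθ]; exact one_ne_zero)
    refine ⟨mul_ne_zero hr' hθ0, ?_⟩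
    rw [norm_mul, hθ, mul_one, Complex.norm_real, Real.norm_of_nonneg hr.le,
      mul_div_cancel_left₀ _ hr']

theorem phaseRank_lt_iff {n m : ℕ} {Θ : Matrix (Fin n) (Fin m) ℂ} (hΘ : ∀ i j, ‖Θ i j‖ = 1)
    {k : ℕ} : phaseRank Θ < k ↔ ∃ a : Fin n → Fin m → ℝ, (∀ i j, 0 < a i j) ∧
      (of fun i j => (a i j : ℂ) * Θ i j).rank < k := by
  have hentry {M : Matrix (Fin n) (Fin m) ℂ} (i j) :=
    Complex.ne_zero_and_div_norm_eq_iff (z := M i j) (hΘ i j)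
  have hΘmem : Θ.rank ∈ {r | ∃ M : Matrix (Fin n) (Fin m) ℂ,
      (∀ i j, M i j ≠ 0) ∧ (∀ i j, M i j / (‖M i j‖ : ℂ) = Θ i j) ∧ M.rank = r} :=
    ⟨Θ, fun i j => ((hentry i j).mpr ⟨1, one_pos, by simp⟩).1,
      fun i j => ((hentry i j).mpr ⟨1, one_pos, by simp⟩).2, rfl⟩
  rw [phaseRank, csInf_lt_iff (OrderBot.bddBelow _) ⟨_, hΘmem⟩]
  constructor
  · rintro ⟨_, ⟨M, hM0, hMΘ, rfl⟩, hk⟩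
    choose a ha hMa using fun i j => (hentry i j).mp ⟨hM0 i j, hMΘ i j⟩
    refine ⟨a, ha, ?_⟩
    rwa [show M = of fun i j => (a i j : ℂ) * Θ i j from Matrix.ext hMa] at hk
  · rintro ⟨a, ha, hk⟩
    exact ⟨_, ⟨_, fun i j => ((hentry i j).mpr ⟨a i j, ha i j, rfl⟩).1,
      fun i j => ((hentry i j).mpr ⟨a i j, ha i j, rfl⟩).2, rfl⟩, hk⟩

theorem prod_apply_filter_sign_eq_prod_fin_three {M : Type*} [CommMonoid M] (s : ℤˣ)
    (f : Fin 3 → M) (i : Fin 3) :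
    ∏ σ ∈ univ.filter (fun σ : Perm (Fin 3) => sign σ = s), f (σ i) = ∏ j, f j := by
  have himage :
      (univ.filter (fun σ : Perm (Fin 3) => sign σ = s)).image (fun σ => σ i) = univ := by
    rcases Int.units_eq_one_or s with rfl | rfl <;> revert i <;> decide
  have hinj : Set.InjOn (fun σ : Perm (Fin 3) => σ i)
      (univ.filter (fun σ : Perm (Fin 3) => sign σ = s) : Set (Perm (Fin 3))) := by
    rw [← card_image_iff, himage]
    rcases Int.units_eq_one_or s with rfl | rfl <;> revert i <;> decide
  rw [← himage, prod_image hinj]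

theorem prod_filter_sign_eq_prod_filter_sign_fin_three {M : Type*} [CommMonoid M]
    (a : Fin 3 → Fin 3 → M) (s t : ℤˣ) :
    ∏ σ ∈ univ.filter (fun σ : Perm (Fin 3) => sign σ = s), ∏ i, a i (σ i) =
      ∏ σ ∈ univ.filter (fun σ : Perm (Fin 3) => sign σ = t), ∏ i, a i (σ i) := by
  rw [prod_comm, prod_comm (s := univ.filter _)]
  simp only [prod_apply_filter_sign_eq_prod_fin_three]

theorem two_mul_card_apply_eq_fin_three (σ τ : Perm (Fin 3)) :
    2 * (#{i | τ i = σ i} : ℤ) = 6 * (if σ = τ then 1 else 0) - sign σ * sign τ + 1 := by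
  revert σ τ; decide

theorem sum_sign_mul_eq_sum_even_sub_sum_odd {α R : Type*} [Fintype α] [DecidableEq α] [Ring R]
    (f : Perm α → R) :
    ∑ σ, ((sign σ : ℤ) : R) * f σ =
      ∑ σ ∈ univ.filter (fun σ => sign σ = 1), f σ -
        ∑ σ ∈ univ.filter (fun σ => sign σ = -1), f σ := by
  rw [← sum_filter_add_sum_filter_not univ (fun σ => sign σ = 1), sub_eq_add_neg,
    ← sum_neg_distrib, filter_congr fun σ _ => Int.units_ne_iff_eq_neg]
  congr 1 <;> refine sum_congr rfl fun σ hσ => ?_ <;> simp [(mem_filter.mp hσ).2]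

theorem exists_sum_apply_eq_of_sum_sign_mul_eq_zero {K : Type*} [Field K] [CharZero K]
    (x : Perm (Fin 3) → K) (hx : ∑ τ, ((sign τ : ℤ) : K) * x τ = 0) :
    ∃ L : Fin 3 → Fin 3 → K, ∀ σ, ∑ i, L i (σ i) = x σ := by
  refine ⟨fun i j => ∑ τ, ((if τ i = j then 3⁻¹ else 0) - 18⁻¹) * x τ, fun σ => ?_⟩
  have hweight (τ : Perm (Fin 3)) :
      ∑ i, ((if τ i = σ i then (3⁻¹ : K) else 0) - 18⁻¹) =
        (if σ = τ then 1 else 0) - ((sign σ : ℤ) : K) * ((sign τ : ℤ) : K) / 6 := by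
    have h := congrArg (Int.cast : ℤ → K) (two_mul_card_apply_eq_fin_three σ τ)
    push_cast at h
    rw [sum_sub_distrib, ← sum_filter]
    simp only [sum_const, nsmul_eq_mul, card_univ, Fintype.card_fin]
    push_cast
    linear_combination h / 6
  calc ∑ i, ∑ τ, ((if τ i = σ i then (3⁻¹ : K) else 0) - 18⁻¹) * x τ
      = ∑ τ, ((if σ = τ then 1 else 0) - ((sign σ : ℤ) : K) * ((sign τ : ℤ) : K) / 6) * x τ := by
        rw [sum_comm]; simp only [← sum_mul, hweight]
    _ = x σ - ((sign σ : ℤ) : K) / 6 * ∑ τ, ((sign τ : ℤ) : K) * x τ := by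
        simp only [sub_mul, sum_sub_distrib, ite_mul, one_mul, zero_mul, sum_ite_eq, mem_univ,
          if_true, mul_sum]
        congr 1; refine sum_congr rfl fun τ _ => by ring
    _ = x σ := by rw [hx, mul_zero, sub_zero]

theorem exists_pos_prod_apply_eq_of_prod_even_eq_prod_odd (c : Perm (Fin 3) → ℝ)
    (hc : ∀ σ, 0 < c σ)
    (hprod : ∏ σ ∈ univ.filter (fun σ => sign σ = 1), c σ =
      ∏ σ ∈ univ.filter (fun σ => sign σ = -1), c σ) :
    ∃ a : Fin 3 → Fin 3 → ℝ, (∀ i j, 0 < a i j) ∧ ∀ σ, ∏ i, a i (σ i) = c σ := by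
  have hlog : ∑ τ, ((sign τ : ℤ) : ℝ) * Real.log (c τ) = 0 := by
    rw [sum_sign_mul_eq_sum_even_sub_sum_odd, ← Real.log_prod fun τ _ => (hc τ).ne',
      ← Real.log_prod fun τ _ => (hc τ).ne', hprod, sub_self]
  obtain ⟨L, hL⟩ := exists_sum_apply_eq_of_sum_sign_mul_eq_zero _ hlog
  refine ⟨fun i j => Real.exp (L i j), fun i j => Real.exp_pos _, fun σ => ?_⟩
  rw [← Real.exp_sum, hL, Real.exp_log (hc σ)]

/-- A 3×3 phase matrix has phase rank less than 3 if and only if there is a vector of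
strictly positive coefficients `c`, indexed by the permutations of `{1,2,3}`, making the
signed combination of determinant monomials vanish, and whose product over even
permutations equals its product over odd permutations. -/
theorem phaseRank_lt_three_iff_exists_positive_coeffs
    (Θ : Matrix (Fin 3) (Fin 3) ℂ) (hphase : ∀ i j, ‖Θ i j‖ = 1) :
    phaseRank Θ < 3 ↔
      ∃ c : Equiv.Perm (Fin 3) → ℝ, (∀ σ, 0 < c σ) ∧
        (∑ σ : Equiv.Perm (Fin 3),
          ((Equiv.Perm.sign σ : ℤ) : ℂ) * (c σ : ℂ) * ∏ i, Θ i (σ i)) = 0 ∧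
        (∏ σ ∈ Finset.univ.filter (fun σ : Equiv.Perm (Fin 3) => Equiv.Perm.sign σ = 1), c σ) =
        (∏ σ ∈ Finset.univ.filter (fun σ : Equiv.Perm (Fin 3) => Equiv.Perm.sign σ = -1), c σ) := by
  have hsingular (a : Fin 3 → Fin 3 → ℝ) : (of fun i j => (a i j : ℂ) * Θ i j).rank < 3 ↔
      ∑ σ : Perm (Fin 3), ((sign σ : ℤ) : ℂ) * ((∏ i, a i (σ i) : ℝ) : ℂ) * ∏ i, Θ i (σ i) = 0 := by
    refine (rank_lt_card_iff_det_eq_zero _).trans ?_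
    rw [det_eq_sum_sign_mul_prod]
    simp only [of_apply, prod_mul_distrib, Complex.ofReal_prod, mul_assoc]
  rw [phaseRank_lt_iff hphase]
  simp only [hsingular]
  constructor
  · rintro ⟨a, ha, hzero⟩
    exact ⟨fun σ => ∏ i, a i (σ i), fun σ => prod_pos fun i _ => ha i (σ i), hzero,
      prod_filter_sign_eq_prod_filter_sign_fin_three a 1 (-1)⟩
  · rintro ⟨c, hc, hzero, hprod⟩
    obtain ⟨a, ha, hac⟩ := exists_pos_prod_apply_eq_of_prod_even_eq_prod_odd c hc hprod
    exact ⟨a, ha, by simpa only [hac] using hzero⟩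
end

section
/- Let b : Fin 3 → ℝ²\{0} (the 'blue' points) and r : Fin 3 → ℝ²\{0} (the 'red' points) be such that the origin lies in the relative interior of the convex hull of the six points b_0, b_1, b_2, r_0, r_1, r_2. Then there is a proper subset J of the six index positions that contains all three blue indices and such that the origin still lies in the relative interior of the convex hull of the points indexed by J. (By symmetry of colors, the same holds with a proper subset containing all three red indices.) -/
/-!
For a finite family `g`, the origin lies in the relative interior of `convexHull (range g)` exactly
when `∑ i, w i • g i = 0` for some strictly positive weights `w`. Start from such a relation. Three
red points in `ℝ²` are linearly dependent. Subtract the largest multiple of such a dependence that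
keeps every coefficient nonnegative. The blue coefficients do not change and at least one red
coefficient becomes zero, so the support of the new relation is the required proper subset.
Exchanging the colours gives the second half.
-/

open Set Filter Topology Module

theorem mem_intrinsicInterior_iff_mem_nhdsWithin {𝕜 V P : Type*} [Ring 𝕜] [AddCommGroup V]
    [Module 𝕜 V] [TopologicalSpace P] [AddTorsor V P] {s : Set P} {x : P} :
    x ∈ intrinsicInterior 𝕜 s ↔ x ∈ affineSpan 𝕜 s ∧ s ∈ 𝓝[affineSpan 𝕜 s] x := by
  simp only [mem_intrinsicInterior, mem_interior_iff_mem_nhds]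
  constructor
  · rintro ⟨y, hy, rfl⟩
    exact ⟨y.2, preimage_coe_mem_nhds_subtype.1 hy⟩
  · rintro ⟨hx, hs⟩
    exact ⟨⟨x, hx⟩, preimage_coe_mem_nhds_subtype.2 hs, rfl⟩

theorem exists_weights_of_mem_convexHull_range {ι E : Type*} [Fintype ι] [AddCommGroup E]
    [Module ℝ E] {g : ι → E} {x : E} (hx : x ∈ convexHull ℝ (range g)) :
    ∃ θ : ι → ℝ, (∀ i, 0 ≤ θ i) ∧ ∑ i, θ i = 1 ∧ ∑ i, θ i • g i = x := by
  classical
  rw [convexHull_range_eq_exists_affineCombination] at hx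
  obtain ⟨s, w, hw₀, hw₁, rfl⟩ := hx
  refine ⟨fun i => if i ∈ s then w i else 0, fun i => ?_, ?_, ?_⟩
  · dsimp only
    split_ifs with hi
    exacts [hw₀ i hi, le_rfl]
  · simpa [Finset.sum_ite_mem] using hw₁
  · simp [s.affineCombination_eq_linear_combination _ _ hw₁, ite_smul, Finset.sum_ite_mem]

section Relations

variable {ι : Type*} [Fintype ι]

theorem exists_pos_mul_le_eq {w α : ι → ℝ} (hw : ∀ i, 0 < w i) (hα : ∃ j, 0 < α j) :
    ∃ t > 0, (∀ i, t * α i ≤ w i) ∧ ∃ j, t * α j = w j := by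
  classical
  obtain ⟨j, hj, hmin⟩ := (Finset.univ.filter (0 < α ·)).exists_min_image (fun i => w i / α i)
    (by simpa [Finset.filter_nonempty_iff] using hα)
  rw [Finset.mem_filter] at hj
  refine ⟨w j / α j, div_pos (hw j) hj.2, fun i => ?_, j, div_mul_cancel₀ _ hj.2.ne'⟩
  rcases le_or_gt (α i) 0 with hi | hi
  · nlinarith [div_pos (hw j) hj.2, hw i]
  · rw [← le_div_iff₀ hi]
    exact hmin i (by simp [hi])

variable {E : Type*} [AddCommGroup E] [Module ℝ E] [FiniteDimensional ℝ E]

theorem exists_relation_supported_of_finrank_lt_card (g : ι → E) {s : Finset ι}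
    (hs : finrank ℝ E < s.card) :
    ∃ α : ι → ℝ, (∀ i ∉ s, α i = 0) ∧ ∑ i, α i • g i = 0 ∧ ∃ j, 0 < α j := by
  classical
  have hdep : ¬ LinearIndepOn ℝ g (s : Set ι) := fun h =>
    hs.not_ge (by simpa using h.fintype_card_le_finrank)
  obtain ⟨f, hfg, j, hjs, hj⟩ := not_linearIndepOn_finset_iff.1 hdep
  set β : ι → ℝ := fun i => if i ∈ s then f i else 0
  have hβ : ∀ i ∉ s, β i = 0 := fun i hi => if_neg hi
  have hβg : ∑ i, β i • g i = 0 := by simpa [β, ite_smul, Finset.sum_ite_mem] using hfg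
  rcases hj.lt_or_gt with hneg | hpos
  · refine ⟨-β, fun i hi => by simp [hβ i hi], by simp [neg_smul, hβg], j, ?_⟩
    simpa [β, hjs] using hneg
  · exact ⟨β, hβ, hβg, j, by simpa [β, hjs] using hpos⟩

theorem exists_nonneg_relation_vanishing_on (g : ι → E) {s : Finset ι}
    (hs : finrank ℝ E < s.card) {w : ι → ℝ} (hw : ∀ i, 0 < w i) (hwg : ∑ i, w i • g i = 0) :
    ∃ v : ι → ℝ, (∀ i, 0 ≤ v i) ∧ (∀ i ∉ s, v i = w i) ∧ (∃ j ∈ s, v j = 0) ∧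
      ∑ i, v i • g i = 0 := by
  obtain ⟨α, hαs, hαg, hα⟩ := exists_relation_supported_of_finrank_lt_card g hs
  obtain ⟨t, -, htw, j, hj⟩ := exists_pos_mul_le_eq hw hα
  refine ⟨fun i => w i - t * α i, fun i => sub_nonneg.2 (htw i), fun i hi => by simp [hαs i hi],
    ⟨j, ?_, sub_eq_zero.2 hj.symm⟩, ?_⟩
  · by_contra hjs
    exact (hw j).ne (by simpa [hαs j hjs] using hj)
  · simp [sub_smul, mul_smul, Finset.sum_sub_distrib, ← Finset.smul_sum, hwg, hαg]

end Relations

section RelativeInterior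

variable {E : Type*} [AddCommGroup E] [Module ℝ E] [TopologicalSpace E] [ContinuousSMul ℝ E]
  {ι : Type*} [Fintype ι]

theorem eventually_smul_mem_of_zero_mem_intrinsicInterior {s : Set E}
    (h : (0 : E) ∈ intrinsicInterior ℝ s) {y : E} (hy : y ∈ s) :
    ∀ᶠ t in 𝓝 (0 : ℝ), t • y ∈ s := by
  obtain ⟨h0, hs⟩ := mem_intrinsicInterior_iff_mem_nhdsWithin.1 h
  have hline : ∀ t : ℝ, t • y ∈ affineSpan ℝ s := fun t => by
    simpa using AffineSubspace.smul_vsub_vadd_mem _ t (subset_affineSpan ℝ s hy) h0 h0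
  have hcont : Tendsto (fun t : ℝ => t • y) (𝓝 0) (𝓝 0) := by
    simpa using (continuous_id.smul continuous_const).tendsto (0 : ℝ) (f := fun t : ℝ => t • y)
  exact (tendsto_nhdsWithin_iff.2 ⟨hcont, Eventually.of_forall hline⟩) hs

theorem exists_pos_relation_of_zero_mem_intrinsicInterior [Nonempty ι] {g : ι → E}
    (h : (0 : E) ∈ intrinsicInterior ℝ (convexHull ℝ (range g))) :
    ∃ w : ι → ℝ, (∀ i, 0 < w i) ∧ ∑ i, w i • g i = 0 := by
  set n : ℝ := (Fintype.card ι : ℝ)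
  set c := ∑ i, n⁻¹ • g i
  have hc : c ∈ convexHull ℝ (range g) :=
    mem_convexHull_of_exists_fintype _ g (fun _ => by positivity) (by simp [n]) mem_range_self rfl
  obtain ⟨t, htc, ht⟩ := ((eventually_nhdsWithin_of_eventually_nhds
    (eventually_smul_mem_of_zero_mem_intrinsicInterior h hc)).and
    (self_mem_nhdsWithin : Iio (0 : ℝ) ∈ 𝓝[<] 0)).exists
  obtain ⟨θ, hθ, -, hθg⟩ := exists_weights_of_mem_convexHull_range htc
  -- `θ` represents `t • c` and the constant weights `-t / n > 0` represent `-(t • c)`.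
  refine ⟨fun i => θ i - t * n⁻¹, fun i => ?_, ?_⟩
  · have : t * n⁻¹ < 0 := mul_neg_of_neg_of_pos ht (by positivity)
    linarith [hθ i]
  · simp only [sub_smul, Finset.sum_sub_distrib, hθg, mul_smul, ← Finset.smul_sum, c, sub_self]

variable [IsTopologicalAddGroup E] [T2Space E]

theorem LinearMap.image_mem_nhdsWithin_range {F : Type*} [AddCommGroup F] [Module ℝ F]
    [TopologicalSpace F] [IsTopologicalAddGroup F] [ContinuousSMul ℝ F] [FiniteDimensional ℝ F]
    (T : F →ₗ[ℝ] E) {U : Set F} {c : F} (hU : U ∈ 𝓝 c) :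
    T '' U ∈ 𝓝[LinearMap.range T] (T c) := by
  have h := (T.rangeRestrict.isOpenMap_of_finiteDimensional
    T.surjective_rangeRestrict).image_mem_nhds hU
  rwa [mem_nhds_subtype_iff_nhdsWithin, image_image] at h

theorem zero_mem_intrinsicInterior_of_pos_relation [Nonempty ι] {g : ι → E} {w : ι → ℝ}
    (hw : ∀ i, 0 < w i) (hwg : ∑ i, w i • g i = 0) :
    (0 : E) ∈ intrinsicInterior ℝ (convexHull ℝ (range g)) := by
  obtain ⟨w, hw, hw₁, hwg⟩ :
      ∃ w : ι → ℝ, (∀ i, 0 < w i) ∧ ∑ i, w i = 1 ∧ ∑ i, w i • g i = 0 := by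
    have hW : 0 < ∑ i, w i := Finset.sum_pos (fun i _ => hw i) Finset.univ_nonempty
    refine ⟨fun i => w i / ∑ j, w j, fun i => div_pos (hw i) hW,
      by rw [← Finset.sum_div, div_self hW.ne'], ?_⟩
    simp only [div_eq_inv_mul, mul_smul, ← Finset.smul_sum, hwg, smul_zero]
  set C := convexHull ℝ (range g)
  set T := Fintype.linearCombination ℝ g
  -- Since `T w = 0`, `T c` is the convex combination of the `g i` with weights
  -- `c + (1 - ∑ c) • w`, which are positive for `c` near `0`.
  set U := {c : ι → ℝ | ∀ i, 0 < c i + (1 - ∑ j, c j) * w i}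
  have hU : U ∈ 𝓝 0 := by
    refine IsOpen.mem_nhds ?_ (by simpa [U] using hw)
    simp only [U, ofPred_forall]
    exact isOpen_iInter_of_finite fun i => isOpen_lt continuous_const (by fun_prop)
  have hUC : T '' U ⊆ C := by
    rintro _ ⟨c, hc, rfl⟩
    refine mem_convexHull_of_exists_fintype _ g (fun i => (hc i).le) ?_ mem_range_self ?_
    · rw [Finset.sum_add_distrib, ← Finset.mul_sum, hw₁]
      ring
    · simp [add_smul, mul_smul, Finset.sum_add_distrib, ← Finset.smul_sum, hwg, T,
        Fintype.linearCombination_apply]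
  have h0C : (0 : E) ∈ C := by simpa [T] using hUC ⟨0, mem_of_mem_nhds hU, rfl⟩
  have hspan : (affineSpan ℝ C : Set E) ⊆ LinearMap.range T := by
    rw [affineSpan_convexHull, Fintype.range_linearCombination]
    exact affineSpan_subset_span
  refine mem_intrinsicInterior_iff_mem_nhdsWithin.2 ⟨subset_affineSpan ℝ C h0C, ?_⟩
  have hTU := T.image_mem_nhdsWithin_range hU
  rw [map_zero] at hTU
  exact mem_of_superset (nhdsWithin_mono _ hspan hTU) hUC

theorem zero_mem_intrinsicInterior_convexHull_range_iff [Nonempty ι] {g : ι → E} :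
    (0 : E) ∈ intrinsicInterior ℝ (convexHull ℝ (range g)) ↔
      ∃ w : ι → ℝ, (∀ i, 0 < w i) ∧ ∑ i, w i • g i = 0 :=
  ⟨exists_pos_relation_of_zero_mem_intrinsicInterior, fun ⟨_, hw, hwg⟩ =>
    zero_mem_intrinsicInterior_of_pos_relation hw hwg⟩

theorem zero_mem_intrinsicInterior_convexHull_image_support {g : ι → E} {v : ι → ℝ}
    (hv : ∀ i, 0 ≤ v i) (hv₀ : ∃ i, v i ≠ 0) (hvg : ∑ i, v i • g i = 0) :
    (0 : E) ∈ intrinsicInterior ℝ (convexHull ℝ (g '' Function.support v)) := by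
  classical
  have : Nonempty (Function.support v) := let ⟨i, hi⟩ := hv₀; ⟨⟨i, hi⟩⟩
  rw [image_eq_range]
  refine zero_mem_intrinsicInterior_convexHull_range_iff.2
    ⟨fun i => v i, fun i => (hv i).lt_of_ne' i.2, ?_⟩
  rw [← Finset.sum_subtype (Function.support v).toFinset (by simp) (fun i => v i • g i),
    Fintype.sum_subset (by simp +contextual), hvg]

theorem exists_ne_univ_zero_mem_intrinsicInterior_convexHull_image [FiniteDimensional ℝ E]
    (g : ι → E) {s : Finset ι} (hs : finrank ℝ E < s.card) {i₀ : ι} (hi₀ : i₀ ∉ s)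
    (h0 : (0 : E) ∈ intrinsicInterior ℝ (convexHull ℝ (range g))) :
    ∃ J : Finset ι, J ≠ Finset.univ ∧ (∀ i ∉ s, i ∈ J) ∧
      (0 : E) ∈ intrinsicInterior ℝ (convexHull ℝ (g '' J)) := by
  classical
  have : Nonempty ι := ⟨i₀⟩
  obtain ⟨w, hw, hwg⟩ := zero_mem_intrinsicInterior_convexHull_range_iff.1 h0
  obtain ⟨v, hv, hvw, ⟨j, -, hj⟩, hvg⟩ := exists_nonneg_relation_vanishing_on g hs hw hwg
  refine ⟨(Function.support v).toFinset, fun h => ?_, fun i hi => ?_, ?_⟩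
  · simpa [hj] using Finset.eq_univ_iff_forall.1 h j
  · simpa [hvw i hi] using (hw i).ne'
  · rw [coe_toFinset]
    exact zero_mem_intrinsicInterior_convexHull_image_support hv
      ⟨i₀, by simpa [hvw i₀ hi₀] using (hw i₀).ne'⟩ hvg

end RelativeInterior

theorem exists_proper_subset_containing_blue_points_general
    (b r : Fin 3 → ℝ × ℝ)
    (h0 : (0 : ℝ × ℝ) ∈ intrinsicInterior ℝ
      (convexHull ℝ (Set.range (Sum.elim b r : Fin 3 ⊕ Fin 3 → ℝ × ℝ)))) :
    (∃ J : Finset (Fin 3 ⊕ Fin 3), J ≠ Finset.univ ∧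
      (∀ i : Fin 3, Sum.inl i ∈ J) ∧
      (0 : ℝ × ℝ) ∈ intrinsicInterior ℝ
        (convexHull ℝ ((Sum.elim b r : Fin 3 ⊕ Fin 3 → ℝ × ℝ) '' J))) ∧
    (∃ K : Finset (Fin 3 ⊕ Fin 3), K ≠ Finset.univ ∧
      (∀ i : Fin 3, Sum.inr i ∈ K) ∧
      (0 : ℝ × ℝ) ∈ intrinsicInterior ℝ
        (convexHull ℝ ((Sum.elim b r : Fin 3 ⊕ Fin 3 → ℝ × ℝ) '' K))) := by
  obtain ⟨J, hJ, hJblue, hJ0⟩ := exists_ne_univ_zero_mem_intrinsicInterior_convexHull_image _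
    (s := Finset.univ.map .inr) (by simp) (i₀ := .inl 0) (by simp) h0
  obtain ⟨K, hK, hKred, hK0⟩ := exists_ne_univ_zero_mem_intrinsicInterior_convexHull_image _
    (s := Finset.univ.map .inl) (by simp) (i₀ := .inr 0) (by simp) h0
  exact ⟨⟨J, hJ, fun i => hJblue _ (by simp), hJ0⟩, ⟨K, hK, fun i => hKred _ (by simp), hK0⟩⟩

/-- Given 3 blue points and 3 red points in `ℝ² \ {0}` whose convex hull has the origin in
its relative interior, one can find a proper subset of the six index positions containing
all blue indices (and, symmetrically, one containing all red indices) whose convex hull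
still has the origin in its relative interior. -/
theorem exists_proper_subset_containing_blue_points
    (b r : Fin 3 → ℝ × ℝ)
    (hb : ∀ i, b i ≠ 0) (hr : ∀ i, r i ≠ 0)
    (h0 : (0 : ℝ × ℝ) ∈ intrinsicInterior ℝ
      (convexHull ℝ (Set.range (Sum.elim b r : Fin 3 ⊕ Fin 3 → ℝ × ℝ)))) :
    (∃ J : Finset (Fin 3 ⊕ Fin 3), J ≠ Finset.univ ∧
      (∀ i : Fin 3, Sum.inl i ∈ J) ∧
      (0 : ℝ × ℝ) ∈ intrinsicInterior ℝ
        (convexHull ℝ ((Sum.elim b r : Fin 3 ⊕ Fin 3 → ℝ × ℝ) '' J))) ∧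
    (∃ K : Finset (Fin 3 ⊕ Fin 3), K ≠ Finset.univ ∧
      (∀ i : Fin 3, Sum.inr i ∈ K) ∧
      (0 : ℝ × ℝ) ∈ intrinsicInterior ℝ
        (convexHull ℝ ((Sum.elim b r : Fin 3 ⊕ Fin 3 → ℝ × ℝ) '' K))) :=
  exists_proper_subset_containing_blue_points_general b r h0
end

section
/- Let f = ∑_α b_α z^α be a nonzero polynomial in n complex variables (b_α ∈ ℂ \ {0} for α in the support of f), and let φ ∈ (S¹)^n. If f is colopsided at φ, i.e., the origin does not lie in the relative interior of the convex hull (in ℝ² ≅ ℂ) of the points (b_α/|b_α|)·φ^α taken over all exponents α in the support of f, then f(z) ≠ 0 for every z ∈ (ℂ*)^n with z_i/|z_i| = φ_i for all i. (Equivalently, a point φ of the coamoeba of the hypersurface f = 0 cannot make f colopsided.) -/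
/-!
If `f(z) = 0` with `z_i = |z_i| φ_i`, then
`0 = ∑_α (|b_α| ∏ |z_i|^{α_i}) · (b_α / |b_α|) φ^α` is a combination of the points
`(b_α / |b_α|) φ^α` with strictly positive weights. When `0` is such a combination of
finitely many points `p_i`, it lies in the relative interior of their convex hull: near `0`,
every point of their span is still a convex combination with positive weights, by continuity
of a linear right inverse of `u ↦ ∑ u_i p_i`.
-/

open Set Filter Topology

theorem mem_intrinsicInterior_of_mem_nhdsWithin {𝕜 V P : Type*} [Ring 𝕜] [AddCommGroup V]
    [Module 𝕜 V] [TopologicalSpace P] [AddTorsor V P] {s : Set P} {x : P}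
    (A : AffineSubspace 𝕜 P) (hsA : s ⊆ A) (hxs : x ∈ s) (hx : s ∈ 𝓝[A] x) :
    x ∈ intrinsicInterior 𝕜 s := by
  obtain ⟨u, hu, hxu, hus⟩ := mem_nhdsWithin.1 hx
  have hspan : affineSpan 𝕜 s ≤ A := affineSpan_le.2 hsA
  exact mem_intrinsicInterior.2 ⟨⟨x, subset_affineSpan 𝕜 s hxs⟩,
    mem_interior.2 ⟨Subtype.val ⁻¹' u, fun y hy => hus ⟨hy, hspan y.2⟩,
      hu.preimage continuous_subtype_val, hxu⟩, rfl⟩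

section PositiveCombination

variable {E : Type*} [AddCommGroup E] [Module ℝ E] [TopologicalSpace E] [IsTopologicalAddGroup E]
  [ContinuousSMul ℝ E] [T2Space E]

theorem convexHull_range_mem_nhdsWithin_span {ι : Type*} [Fintype ι] [Nonempty ι] (p : ι → E)
    (c : ι → ℝ) (hc : ∀ i, 0 < c i) (hcp : ∑ i, c i • p i = 0) :
    convexHull ℝ (range p) ∈ 𝓝[Submodule.span ℝ (range p)] 0 := by
  set L := Fintype.linearCombination ℝ p
  rw [← Fintype.range_linearCombination, nhdsWithin_eq_map_subtype_coe (zero_mem _), mem_map]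
  obtain ⟨R, hR⟩ := L.rangeRestrict.exists_rightInverse_of_surjective L.range_rangeRestrict
  have hLR (y : LinearMap.range L) : L (R y) = y := congrArg Subtype.val (LinearMap.congr_fun hR y)
  set c' : ι → ℝ := (∑ i, c i)⁻¹ • c
  have hc' : ∀ i, 0 < c' i := fun i =>
    mul_pos (inv_pos.2 (Finset.sum_pos (fun i _ => hc i) Finset.univ_nonempty)) (hc i)
  have hc'_sum : ∑ i, c' i = 1 := by
    simp only [c', Pi.smul_apply, smul_eq_mul, ← Finset.mul_sum]
    exact inv_mul_cancel₀ (Finset.sum_pos (fun i _ => hc i) Finset.univ_nonempty).ne'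
  have hLc' : L c' = 0 := by
    rw [map_smul, Fintype.linearCombination_apply, hcp, smul_zero]
  -- Shifting `R y` along `c'` keeps its image `y` and makes the weights sum to one.
  let w : LinearMap.range L → ι → ℝ := fun y => R y + (1 - ∑ i, R y i) • c'
  have hw_cont : Continuous w := by
    have := LinearMap.continuous_of_finiteDimensional R
    fun_prop
  have hw_sum (y) : ∑ i, w y i = 1 := by
    simp only [w, Pi.add_apply, Pi.smul_apply, smul_eq_mul, Finset.sum_add_distrib,
      ← Finset.mul_sum, hc'_sum]
    ring
  have hw_comb (y) : ∑ i, w y i • p i = y := by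
    rw [← Fintype.linearCombination_apply, map_add, map_smul, hLc', smul_zero, add_zero, hLR]
  have hw_pos : ∀ᶠ y in 𝓝 0, ∀ i, 0 < w y i := by
    refine eventually_all.2 fun i => ((continuous_apply i).comp hw_cont).tendsto 0 |>.eventually
      (lt_mem_nhds ?_)
    simpa [w] using hc' i
  filter_upwards [hw_pos] with y hy
  rw [mem_preimage, ← hw_comb y]
  exact (convex_convexHull ℝ _).sum_mem (fun i _ => (hy i).le) (hw_sum y)
    (fun i _ => subset_convexHull ℝ _ (mem_range_self i))

theorem zero_mem_intrinsicInterior_convexHull_image {ι : Type*} (s : Finset ι) (hs : s.Nonempty)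
    (p : ι → E) (c : ι → ℝ) (hc : ∀ i ∈ s, 0 < c i) (hcp : ∑ i ∈ s, c i • p i = 0) :
    (0 : E) ∈ intrinsicInterior ℝ (convexHull ℝ (p '' s)) := by
  have : Nonempty s := hs.to_subtype
  have hnhds := convexHull_range_mem_nhdsWithin_span (fun i : s => p i) (fun i => c i)
    (fun i => hc i i.2) (by rwa [Finset.sum_coe_sort s fun i => c i • p i])
  have hrange : range (fun i : s => p i) = p '' s := by ext; simp
  rw [hrange] at hnhds
  exact mem_intrinsicInterior_of_mem_nhdsWithin (Submodule.span ℝ (p '' s)).toAffineSubspace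
    (convexHull_min Submodule.subset_span (Submodule.span ℝ _).convex)
    (mem_of_mem_nhdsWithin (zero_mem _) hnhds) hnhds

end PositiveCombination

theorem Complex.ofReal_norm_mul_div_norm (b : ℂ) : (‖b‖ : ℂ) * (b / ‖b‖) = b := by
  rcases eq_or_ne b 0 with rfl | hb
  · simp
  · exact mul_div_cancel₀ b (by exact_mod_cast norm_ne_zero_iff.2 hb)

theorem norm_smul_phase_mul_prod_phase_pow {σ : Type*} [Fintype σ] (b : ℂ) (z : σ → ℂ)
    (α : σ →₀ ℕ) :
    (‖b‖ * ∏ i, ‖z i‖ ^ α i) • (b / ‖b‖ * ∏ i, (z i / ‖z i‖) ^ α i) = b * ∏ i, z i ^ α i := by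
  conv_rhs => rw [← Complex.ofReal_norm_mul_div_norm b]
  simp_rw [Complex.real_smul, Complex.ofReal_mul, Complex.ofReal_prod, Complex.ofReal_pow]
  conv_rhs => enter [2, 2, i]; rw [← Complex.ofReal_norm_mul_div_norm (z i), mul_pow]
  rw [Finset.prod_mul_distrib]
  ring

theorem eval_ne_zero_of_colopsided_general {n : ℕ} (f : MvPolynomial (Fin n) ℂ) (hf : f ≠ 0)
    (φ : Fin n → ℂ)
    (hcolop : (0 : ℂ) ∉ intrinsicInterior ℝ (convexHull ℝ
      {w : ℂ | ∃ α ∈ f.support,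
        w = (f.coeff α / ‖f.coeff α‖) * ∏ i, φ i ^ α i})) :
    ∀ z : Fin n → ℂ, (∀ i, z i ≠ 0) → (∀ i, z i / ‖z i‖ = φ i) →
      MvPolynomial.eval z f ≠ 0 := by
  intro z hz hphase heval
  obtain rfl : φ = fun i => z i / ‖z i‖ := funext fun i => (hphase i).symm
  refine hcolop ?_
  have hset : {w : ℂ | ∃ α ∈ f.support, w = (f.coeff α / ‖f.coeff α‖) * ∏ i, (z i / ‖z i‖) ^ α i}
      = (fun α => (f.coeff α / ‖f.coeff α‖) * ∏ i, (z i / ‖z i‖) ^ α i) '' f.support := by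
    ext w; simp [eq_comm]
  rw [hset]
  refine zero_mem_intrinsicInterior_convexHull_image f.support (MvPolynomial.support_nonempty.2 hf)
    _ (fun α => ‖f.coeff α‖ * ∏ i, ‖z i‖ ^ α i) (fun α hα => ?_) ?_
  · have hcoeff : 0 < ‖f.coeff α‖ := norm_pos_iff.2 (MvPolynomial.mem_support_iff.1 hα)
    exact mul_pos hcoeff (Finset.prod_pos fun i _ => pow_pos (norm_pos_iff.2 (hz i)) _)
  · rw [← heval, MvPolynomial.eval_eq']
    exact Finset.sum_congr rfl fun α _ => norm_smul_phase_mul_prod_phase_pow _ z α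

/-- (Colopsidedness criterion for coamoebas.) Let `f` be a nonzero polynomial in `n`
complex variables and `φ ∈ (S¹)ⁿ`. If `f` is colopsided at `φ`, i.e., the origin is not
in the relative interior of the convex hull of the points `(b_α/|b_α|)·φ^α` for `α` in
the support of `f`, then `f` does not vanish at any point of `(ℂ*)ⁿ` with entrywise
phases `φ`. -/
theorem eval_ne_zero_of_colopsided {n : ℕ} (f : MvPolynomial (Fin n) ℂ) (hf : f ≠ 0)
    (φ : Fin n → ℂ) (hφ : ∀ i, ‖φ i‖ = 1)
    (hcolop : (0 : ℂ) ∉ intrinsicInterior ℝ (convexHull ℝ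
      {w : ℂ | ∃ α ∈ f.support,
        w = (f.coeff α / ‖f.coeff α‖) * ∏ i, φ i ^ α i})) :
    ∀ z : Fin n → ℂ, (∀ i, z i ≠ 0) → (∀ i, z i / ‖z i‖ = φ i) →
      MvPolynomial.eval z f ≠ 0 :=
  eval_ne_zero_of_colopsided_general f hf φ hcolop
end
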